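/- Let β ∈ (0, 1/3), set c = cos(2πβ) (so c > −1/2), and let n ∈ ℕ. Then the limit, as ω → ωₙ* with ω ∈ Ĩⁿ(β) and ω ≠ ωₙ*, of (√(g_β(ω)² − 4) − (1 + 2c)/√(2 + 2c)) / cos²(ωL) equals −9(3 + 2c)/((1 + 2c)·√(2 + 2c)). (This is the second-order expansion of √(g_β² − 4) at the Dirac frequency ωₙ*.) -/

import Mathlib

open Real Filter Topology

/-- The edge length `L = 1/√3`. -/
noncomputable def L : ℝ := 1 / Real.sqrt 3

/-- The Dirac frequency `ωₙ* = (2n+1)π/(2L)`. -/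
noncomputable def ωstar (n : ℕ) : ℝ := (2 * n + 1) * π / (2 * L)

/-- `g_β(ω) = (9·cos²(ωL) − 3 − 2·cos(2πβ)) / √(2 + 2·cos(2πβ))`. -/
noncomputable def g (β ω : ℝ) : ℝ :=
  (9 * Real.cos (ω * L) ^ 2 - 3 - 2 * Real.cos (2 * π * β)) /
    Real.sqrt (2 + 2 * Real.cos (2 * π * β))

/-- `a(β) = arccos(√(3 + 2·cos(2πβ) − 2·√(2 + 2·cos(2πβ)))/3)`. -/
noncomputable def aβ (β : ℝ) : ℝ :=
  Real.arccos (Real.sqrt (3 + 2 * Real.cos (2 * π * β) -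
    2 * Real.sqrt (2 + 2 * Real.cos (2 * π * β))) / 3)

/-- The open interval `Ĩⁿ(β) = (nπ/L + a(β)/L, (n+1)π/L − a(β)/L)`. -/
noncomputable def Itilde (β : ℝ) (n : ℕ) : Set ℝ :=
  Set.Ioo (n * π / L + aβ β / L) ((n + 1) * π / L - aβ β / L)

/-! Write `s = √(2 + 2c)` and `x = cos²(ωL)`, so that `g_β(ω) = G(x)` with `G(x) = (9x − 3 − 2c)/s`
affine. Since `G(0)² − 4 = ((1 + 2c)/s)² > 0`, the map `x ↦ √(G(x)² − 4)` is differentiable at `0`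
with value `(1 + 2c)/s` there, and the quotient in the statement is its difference quotient at `0`.
As `ω → ωₙ*` with `ω ≠ ωₙ*`, `x` tends to `0` through nonzero values, because `cos` has a simple
zero at `ωₙ* L`; so the quotient tends to the derivative `G(0) G'(0)/√(G(0)² − 4)`. -/

lemma neg_half_lt_cos_two_pi_mul {β : ℝ} (hβ0 : 0 ≤ β) (hβ1 : β < 1 / 3) :
    -(1 / 2) < Real.cos (2 * π * β) := by
  have hπ := Real.pi_pos
  have hlt : Real.cos (2 * π / 3) < Real.cos (2 * π * β) :=
    Real.cos_lt_cos_of_nonneg_of_le_pi (by positivity) (by linarith) (by nlinarith)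
  have hval : Real.cos (2 * π / 3) = -(1 / 2) := by
    rw [show 2 * π / 3 = π - π / 3 by ring, Real.cos_pi_sub, Real.cos_pi_div_three]
  linarith

lemma cos_ωstar_mul_L (n : ℕ) : Real.cos (ωstar n * L) = 0 := by
  have hL : L ≠ 0 := by unfold L; positivity
  rw [show ωstar n * L = n * π + π / 2 by unfold ωstar; field_simp, Real.cos_add,
    Real.cos_pi_div_two, Real.sin_pi_div_two, Real.sin_nat_mul_pi]
  ring

lemma tendsto_cos_mul_sq_nhdsNE_zero {a x : ℝ} (ha : a ≠ 0) (hx : Real.cos (x * a) = 0) :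
    Tendsto (fun ω => Real.cos (ω * a) ^ 2) (𝓝[≠] x) (𝓝[≠] 0) := by
  have hsin : Real.sin (x * a) ≠ 0 := by
    intro h
    simpa [hx, h] using Real.sin_sq_add_cos_sq (x * a)
  have hderiv : HasDerivAt (fun ω => Real.cos (ω * a)) (-Real.sin (x * a) * a) x := by
    simpa using ((hasDerivAt_id x).mul_const a).cos
  have hcos := hderiv.tendsto_nhdsNE (mul_ne_zero (neg_ne_zero.mpr hsin) ha)
  rw [hx] at hcos
  have hsq : Tendsto (fun y : ℝ => y ^ 2) (𝓝[≠] 0) (𝓝[≠] 0) :=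
    tendsto_nhdsWithin_of_tendsto_nhds_of_eventually_within _
      (((continuous_pow 2).tendsto' 0 0 (by simp)).mono_left nhdsWithin_le_nhds)
      (eventually_mem_nhdsWithin.mono fun y hy => pow_ne_zero 2 hy)
  exact hsq.comp hcos

lemma sq_div_sqrt_sub_four {c : ℝ} (hc : -(1 / 2) < c) :
    ((3 + 2 * c) / Real.sqrt (2 + 2 * c)) ^ 2 - 4 = ((1 + 2 * c) / Real.sqrt (2 + 2 * c)) ^ 2 := by
  have hss : Real.sqrt (2 + 2 * c) ^ 2 = 2 + 2 * c := Real.sq_sqrt (by linarith)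
  have hs : 2 + 2 * c ≠ 0 := by linarith
  rw [div_pow, div_pow, hss, eq_div_iff hs, sub_mul, div_mul_cancel₀ _ hs]
  ring

lemma hasDerivAt_sqrt_sq_sub_four {c : ℝ} (hc : -(1 / 2) < c) :
    HasDerivAt (fun x => Real.sqrt (((9 * x - 3 - 2 * c) / Real.sqrt (2 + 2 * c)) ^ 2 - 4))
      (-(9 * (3 + 2 * c)) / ((1 + 2 * c) * Real.sqrt (2 + 2 * c))) 0 := by
  set s := Real.sqrt (2 + 2 * c)
  have hs : 0 < s := Real.sqrt_pos.mpr (by linarith)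
  have hG : HasDerivAt (fun x => (9 * x - 3 - 2 * c) / s) (9 / s) 0 := by
    simpa using ((((hasDerivAt_id (0 : ℝ)).const_mul 9).sub_const 3).sub_const (2 * c)).div_const s
  have h0 : ((9 * 0 - 3 - 2 * c) / s) ^ 2 - 4 = ((1 + 2 * c) / s) ^ 2 := by
    rw [← sq_div_sqrt_sub_four hc]
    ring
  have h1c : 0 < 1 + 2 * c := by linarith
  have hq : HasDerivAt (fun x => ((9 * x - 3 - 2 * c) / s) ^ 2 - 4)
      (2 * ((9 * 0 - 3 - 2 * c) / s) ^ 1 * (9 / s)) 0 :=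
    (hG.pow 2).sub_const 4
  convert hq.sqrt (by rw [h0]; positivity) using 1
  rw [h0, Real.sqrt_sq (by positivity)]
  field_simp
  ring

theorem stmt_13 (β : ℝ) (hβ0 : 0 < β) (hβ1 : β < 1 / 3) (n : ℕ) :
    Tendsto
      (fun ω : ℝ =>
        (Real.sqrt (g β ω ^ 2 - 4) -
            (1 + 2 * Real.cos (2 * π * β)) / Real.sqrt (2 + 2 * Real.cos (2 * π * β))) /
          Real.cos (ω * L) ^ 2)
      (𝓝[Itilde β n \ {ωstar n}] (ωstar n))
      (𝓝 (-(9 * (3 + 2 * Real.cos (2 * π * β))) /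
        ((1 + 2 * Real.cos (2 * π * β)) * Real.sqrt (2 + 2 * Real.cos (2 * π * β))))) := by
  have hc := neg_half_lt_cos_two_pi_mul hβ0.le hβ1
  have hL : L ≠ 0 := by unfold L; positivity
  have hslope := (hasDerivAt_iff_tendsto_slope.mp (hasDerivAt_sqrt_sq_sub_four hc)).comp
    (tendsto_cos_mul_sq_nhdsNE_zero hL (cos_ωstar_mul_L n))
  refine (hslope.congr fun ω => ?_).mono_left (nhdsWithin_mono _ (Set.sdiff_subset_compl _ _))
  rw [Function.comp_apply, slope_def_field, sub_zero, g]
  congr 2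
  rw [show 9 * 0 - 3 - 2 * Real.cos (2 * π * β) = -(3 + 2 * Real.cos (2 * π * β)) by ring,
    neg_div, neg_sq, sq_div_sqrt_sub_four hc, Real.sqrt_sq (div_nonneg (by linarith) (by positivity))]
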